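/- For multiplicative characters A, B, B', C of F_q and x, y ∈ F_q, the finite field Appell function F₁(A;B,B';C;x,y) := ε(xy)·(AC)(-1)·∑_{u∈F_q} A(u)(ĀC)(1-u)B̄(1-ux)B̄'(1-uy) satisfies F₁(A;B,B';C;x,y) = (1/(q-1)²) ∑_{χ,λ} [Aχλ choose Cχλ][Bχ choose χ][B'λ choose λ] χ(x)λ(y), where sums are over all multiplicative characters. -/

import Mathlib

open Finset

variable {F : Type*} [Field F] [Fintype F] [DecidableEq F]

/-- Finite-field binomial coefficient `[A choose B] = B(-1) * J(A, B⁻¹)`. -/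
noncomputable def ffBinom (A B : MulChar F ℂ) : ℂ :=
  B (-1) * jacobiSum A B⁻¹

/-- Finite-field Gauss hypergeometric function
`₂F₁[A,B;C;x] = ε(x)·(BC)(-1)·∑_u B(u)(B̅C)(1-u)A̅(1-ux)`. -/
noncomputable def ffHyp (A B C : MulChar F ℂ) (x : F) : ℂ :=
  (1 : MulChar F ℂ) x * (B * C) (-1) *
    ∑ u : F, B u * (B⁻¹ * C) (1 - u) * A⁻¹ (1 - u * x)

/-- Finite-field Appell function
`F₁(A;B,B';C;x,y) = ε(xy)·(AC)(-1)·∑_u A(u)(A̅C)(1-u)B̅(1-ux)B̅'(1-uy)`. -/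
noncomputable def ffAppellF1 (A B B' C : MulChar F ℂ) (x y : F) : ℂ :=
  (1 : MulChar F ℂ) (x * y) * (A * C) (-1) *
    ∑ u : F, A u * (A⁻¹ * C) (1 - u) * B⁻¹ (1 - u * x) * B'⁻¹ (1 - u * y)

/-- δ(0)=1, δ(t)=0 otherwise. -/
noncomputable def ffDelta (x : F) : ℂ := if x = 0 then 1 else 0

/-! Orthogonality of characters gives the binomial theorem
`∑_χ [Bχ choose χ] χ(x) = (q - 1) ε(x) B̄(1 - x)`. Substituting it for `B̄(1 - ux)` and
`B̄'(1 - uy)` in the defining sum of `F₁` (the factors `ε(ux) ε(uy)` are absorbed by `A(u)` up to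
`ε(xy)`), the remaining `u`-sum is the Jacobi sum `J(Aχλ, ĀC)`. The reflection
`J(X, Y) = X(-1) J(X, (XY)⁻¹)`, which comes from the substitution `u ↦ u / (u - 1)`, turns
`(AC)(-1) J(Aχλ, ĀC)` into `[Aχλ choose Cχλ]`. -/

theorem MulChar.sum_apply_eq_ite {M R : Type*} [CommMonoid M] [Finite M] [CommRing R] [IsDomain R]
    [HasEnoughRootsOfUnity R (Monoid.exponent Mˣ)] [Fintype (MulChar M R)] [DecidableEq M]
    (a : M) : ∑ χ : MulChar M R, χ a = if a = 1 then (Nat.card Mˣ : R) else 0 := by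
  split_ifs with ha
  · simp only [ha, map_one, sum_const, card_univ, nsmul_eq_mul, mul_one, ← Nat.card_eq_fintype_card,
      MulChar.card_eq_card_units_of_hasEnoughRootsOfUnity]
  · obtain ⟨χ, hχ⟩ := MulChar.exists_apply_ne_one_of_hasEnoughRootsOfUnity M R ha
    refine eq_zero_of_mul_eq_self_left hχ ?_
    simp only [mul_sum, ← MulChar.mul_apply]
    exact Fintype.sum_bijective _ (Group.mulLeft_bijective χ) _ _ fun _ ↦ rfl

theorem MulChar.apply_neg_one_mul_self {K R : Type*} [CommRing K] [CommRing R]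
    (χ : MulChar K R) : χ (-1) * χ (-1) = 1 := by
  rw [← map_mul, neg_mul_neg, one_mul, map_one]

theorem MulChar.apply_mul_one_apply_mul {M R : Type*} [CommMonoid M] [CommRing R]
    (χ : MulChar M R) (u x : M) : χ u * (1 : MulChar M R) (u * x) = (1 : MulChar M R) x * χ u := by
  rw [map_mul, ← mul_assoc, ← MulChar.mul_apply, mul_one, mul_comm]

theorem MulChar.sum_ite_mul_eq_one {K R : Type*} [Field K] [Fintype K] [DecidableEq K]
    [CommRing R] (χ : MulChar K R) (a : K) :
    ∑ t : K, (if t * a = 1 then χ t else 0) = χ⁻¹ a := by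
  rcases eq_or_ne a 0 with rfl | ha
  · simp
  · simp only [mul_eq_one_iff_eq_inv₀ ha, sum_ite_eq', mem_univ, if_true, MulChar.inv_apply']

/-- `u ↦ u / (u - 1)`, except that `1` is sent to itself instead of to `1 / 0 = 0`, which makes it
an involution. -/
def divSubOne {K : Type*} [Field K] [DecidableEq K] (u : K) : K :=
  if u = 1 then 1 else u / (u - 1)

theorem divSubOne_involutive {K : Type*} [Field K] [DecidableEq K] :
    Function.Involutive (divSubOne (K := K)) := by
  intro u
  by_cases hu : u = 1
  · simp [divSubOne, hu]
  · have hu' : u - 1 ≠ 0 := sub_ne_zero.mpr hu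
    have hne : u / (u - 1) ≠ 1 := fun h ↦ by
      rw [div_eq_one_iff_eq hu'] at h
      exact one_ne_zero (by linear_combination h : (1 : K) = 0)
    simp only [divSubOne, if_neg hu, if_neg hne]
    field_simp
    ring

theorem MulChar.apply_mul_apply_one_sub_eq_divSubOne {K R : Type*} [Field K] [DecidableEq K]
    [CommRing R] (χ ψ : MulChar K R) (u : K) :
    χ u * ψ (1 - u) = χ (-1) * (χ (divSubOne u) * (χ * ψ)⁻¹ (1 - divSubOne u)) := by
  by_cases hu : u = 1
  · simp [divSubOne, hu]
  have hu' : 1 - u ≠ 0 := sub_ne_zero.mpr (Ne.symm hu)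
  have hdiv : u / (u - 1) = -1 * u * (1 - u)⁻¹ := by rw [← neg_sub, div_neg]; ring
  have hsub : 1 - u / (u - 1) = (1 - u)⁻¹ := by field_simp; ring
  have hcancel : χ (1 - u)⁻¹ * χ (1 - u) = 1 := by rw [← map_mul, inv_mul_cancel₀ hu', map_one]
  rw [divSubOne, if_neg hu, hsub, hdiv, MulChar.inv_apply', inv_inv]
  simp only [map_mul, MulChar.mul_apply]
  linear_combination (-(χ u * ψ (1 - u))) * χ.apply_neg_one_mul_self
    - χ u * ψ (1 - u) * χ (-1) * χ (-1) * hcancel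

theorem jacobiSum_eq_apply_neg_one_mul_jacobiSum_inv {K R : Type*} [Field K] [Fintype K]
    [DecidableEq K] [CommRing R] (χ ψ : MulChar K R) :
    jacobiSum χ ψ = χ (-1) * jacobiSum χ (χ * ψ)⁻¹ := by
  rw [jacobiSum, jacobiSum, mul_sum]
  exact Fintype.sum_equiv divSubOne_involutive.toPerm _ _
    (χ.apply_mul_apply_one_sub_eq_divSubOne ψ)

theorem ffBinom_eq_apply_neg_one_mul_jacobiSum (X Z : MulChar F ℂ) :
    ffBinom X Z = (X * Z) (-1) * jacobiSum X (X⁻¹ * Z) := by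
  rw [ffBinom, jacobiSum_eq_apply_neg_one_mul_jacobiSum_inv, mul_inv_rev, inv_inv, mul_comm Z,
    MulChar.mul_apply]
  ring

theorem ffBinom_mul_mul_eq (A C χ μ : MulChar F ℂ) :
    ffBinom (A * χ * μ) (C * χ * μ) = (A * C) (-1) * jacobiSum (A * χ * μ) (A⁻¹ * C) := by
  have hinv : (A * χ * μ)⁻¹ * (C * χ * μ) = A⁻¹ * C := by
    rw [← div_eq_inv_mul, ← div_eq_inv_mul, mul_div_mul_right_eq_div, mul_div_mul_right_eq_div]
  rw [ffBinom_eq_apply_neg_one_mul_jacobiSum, hinv]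
  simp only [MulChar.mul_apply]
  linear_combination (A (-1) * C (-1) * μ (-1) * μ (-1) * jacobiSum (A * χ * μ) (A⁻¹ * C)) *
      χ.apply_neg_one_mul_self + (A (-1) * C (-1) * jacobiSum (A * χ * μ) (A⁻¹ * C)) *
      μ.apply_neg_one_mul_self

theorem neg_one_mul_mul_inv_one_sub_mul_eq_one_iff {K : Type*} [Field K] {x : K} (hx : x ≠ 0)
    (t : K) : -1 * t * (1 - t)⁻¹ * x = 1 ↔ t * (1 - x) = 1 := by
  by_cases ht : t = 1
  · simp [ht, hx]
  have ht' : 1 - t ≠ 0 := sub_ne_zero.mpr (Ne.symm ht)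
  rw [show -1 * t * (1 - t)⁻¹ * x = -(t * x) / (1 - t) by ring, div_eq_one_iff_eq ht']
  constructor <;> intro h <;> linear_combination h

theorem card_sub_one_ne_zero (K : Type*) [Field K] [Fintype K] : (Fintype.card K : ℂ) - 1 ≠ 0 := by
  rw [sub_ne_zero, Ne, Nat.cast_eq_one]
  exact Fintype.one_lt_card.ne'

theorem sum_ffBinom_mul_apply [Fintype (MulChar F ℂ)] (B : MulChar F ℂ) (x : F) :
    ∑ χ : MulChar F ℂ, ffBinom (B * χ) χ * χ x =
      ((Fintype.card F : ℂ) - 1) * ((1 : MulChar F ℂ) x * B⁻¹ (1 - x)) := by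
  have hterm (χ : MulChar F ℂ) :
      ffBinom (B * χ) χ * χ x = ∑ t : F, B t * χ (-1 * t * (1 - t)⁻¹ * x) := by
    simp only [ffBinom, jacobiSum, sum_mul, mul_sum, map_mul, MulChar.mul_apply,
      MulChar.inv_apply']
    exact sum_congr rfl fun t _ ↦ by ring
  have hcard : (Nat.card Fˣ : ℂ) = (Fintype.card F : ℂ) - 1 := by
    rw [Nat.card_eq_fintype_card, Fintype.card_units, Nat.cast_sub Fintype.card_pos, Nat.cast_one]
  calc ∑ χ : MulChar F ℂ, ffBinom (B * χ) χ * χ x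
      = ∑ t : F, ∑ χ : MulChar F ℂ, B t * χ (-1 * t * (1 - t)⁻¹ * x) := by
        simp only [hterm]
        exact sum_comm
    _ = ((Fintype.card F : ℂ) - 1) * ∑ t : F, if -1 * t * (1 - t)⁻¹ * x = 1 then B t else 0 := by
        rw [mul_sum]
        refine sum_congr rfl fun t _ ↦ ?_
        rw [← mul_sum, MulChar.sum_apply_eq_ite, hcard]
        split_ifs <;> ring
    _ = ((Fintype.card F : ℂ) - 1) * ((1 : MulChar F ℂ) x * B⁻¹ (1 - x)) := by
        rcases eq_or_ne x 0 with rfl | hx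
        · simp [MulChar.map_zero]
        · simp only [neg_one_mul_mul_inv_one_sub_mul_eq_one_iff hx, MulChar.sum_ite_mul_eq_one,
            MulChar.one_apply hx.isUnit, one_mul]

theorem stmt2 [Fintype (MulChar F ℂ)] (A B B' C : MulChar F ℂ) (x y : F) :
    ffAppellF1 A B B' C x y =
      (((Fintype.card F : ℂ) - 1) ^ 2)⁻¹ *
        ∑ χ : MulChar F ℂ, ∑ μ : MulChar F ℂ,
          ffBinom (A * χ * μ) (C * χ * μ) * ffBinom (B * χ) χ * ffBinom (B' * μ) μ *
            χ x * μ y := by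
  have hbinom (D : MulChar F ℂ) (z : F) :
      ((Fintype.card F : ℂ) - 1)⁻¹ * ∑ χ : MulChar F ℂ, ffBinom (D * χ) χ * χ z =
        (1 : MulChar F ℂ) z * D⁻¹ (1 - z) := by
    rw [sum_ffBinom_mul_apply, inv_mul_cancel_left₀ (card_sub_one_ne_zero F)]
  have hprincipal (u : F) : A u * (1 : MulChar F ℂ) (u * x) * (1 : MulChar F ℂ) (u * y) =
      (1 : MulChar F ℂ) (x * y) * A u := by
    rw [A.apply_mul_one_apply_mul, mul_assoc, A.apply_mul_one_apply_mul, ← mul_assoc, ← map_mul]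
  calc ffAppellF1 A B B' C x y
      = (A * C) (-1) * ∑ u : F, A u * (A⁻¹ * C) (1 - u) *
          ((1 : MulChar F ℂ) (u * x) * B⁻¹ (1 - u * x)) *
          ((1 : MulChar F ℂ) (u * y) * B'⁻¹ (1 - u * y)) := by
        simp only [ffAppellF1, mul_sum]
        refine sum_congr rfl fun u _ ↦ ?_
        linear_combination (-(A * C) (-1) * (A⁻¹ * C) (1 - u) * B⁻¹ (1 - u * x) *
          B'⁻¹ (1 - u * y)) * hprincipal u
    _ = (A * C) (-1) * ∑ u : F, A u * (A⁻¹ * C) (1 - u) *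
          (((Fintype.card F : ℂ) - 1)⁻¹ * ∑ χ : MulChar F ℂ, ffBinom (B * χ) χ * χ (u * x)) *
          (((Fintype.card F : ℂ) - 1)⁻¹ * ∑ μ : MulChar F ℂ, ffBinom (B' * μ) μ * μ (u * y)) := by
        simp only [hbinom]
    _ = _ := by
        simp only [ffBinom_mul_mul_eq, jacobiSum, mul_sum, sum_mul]
        conv_rhs => rw [sum_comm_cycle]
        refine sum_congr rfl fun u _ ↦ ?_
        rw [sum_comm]
        refine sum_congr rfl fun χ _ ↦ sum_congr rfl fun μ _ ↦ ?_
        simp only [← inv_pow, MulChar.mul_apply, map_mul]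
        ring
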